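/- arXiv:1504.05862 — 4 statements merged into one kernel-verified Lean document; each statement's English description precedes it below -/
import Mathlib

section
/- Let P > 0, h ∈ ℝ^K, and α_1, …, α_K > 0. Define M = (1/P)·I + h hᵀ, let M^{1/2} be its positive semidefinite square root, and set F = (M^{1/2})^{-1} · diag(√α_1, …, √α_K). Suppose a_1, …, a_K ∈ ℤ^K are nonzero integer vectors (viewed as real vectors) satisfying ∏_{k=1}^K ‖F a_k‖² ≤ K^K · (det F)². Then, writing SNR_k = α_k · P, the computation rates R_{comb,k} = max( (1/2)·log( SNR_k / ‖F a_k‖² ), 0 ) satisfy Σ_{k=1}^K R_{comb,k} ≥ (1/2)·log(1 + ‖h‖²·P) − (K/2)·log K. -/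
open Matrix

/-- `F = (M^{1/2})⁻¹ · diag(√α_1, …, √α_K)` where `M^{1/2}` is the positive semidefinite
square root of the positive semidefinite matrix `M`. -/
noncomputable def Fmat {K : ℕ} {M : Matrix (Fin K) (Fin K) ℝ} (hM : M.PosSemidef)
    (α : Fin K → ℝ) : Matrix (Fin K) (Fin K) ℝ :=
  ((hM.1.eigenvectorUnitary : Matrix (Fin K) (Fin K) ℝ) *
      Matrix.diagonal ((↑) ∘ (Real.sqrt ·) ∘ hM.1.eigenvalues) *
      (star hM.1.eigenvectorUnitary : Matrix (Fin K) (Fin K) ℝ))⁻¹ * Matrix.diagonal (fun ℓ => Real.sqrt (α ℓ))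

noncomputable def sqrtM {K : ℕ} {M : Matrix (Fin K) (Fin K) ℝ} (hM : M.PosSemidef) :
    Matrix (Fin K) (Fin K) ℝ :=
  (hM.1.eigenvectorUnitary : Matrix (Fin K) (Fin K) ℝ) *
      Matrix.diagonal ((↑) ∘ (Real.sqrt ·) ∘ hM.1.eigenvalues) *
      (star hM.1.eigenvectorUnitary : Matrix (Fin K) (Fin K) ℝ)

lemma sqrtM_mul_self {K : ℕ} {M : Matrix (Fin K) (Fin K) ℝ} (hM : M.PosSemidef) :
    sqrtM hM * sqrtM hM = M := by
  have hs := hM.1.spectral_theorem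
  simp only [Unitary.conjStarAlgAut_apply] at hs
  conv_rhs => rw [hs]
  unfold sqrtM
  have hU : (star hM.1.eigenvectorUnitary : Matrix (Fin K) (Fin K) ℝ) *
      (hM.1.eigenvectorUnitary : Matrix (Fin K) (Fin K) ℝ) = 1 := Unitary.coe_star_mul_self _
  have hD : Matrix.diagonal ((↑) ∘ (Real.sqrt ·) ∘ hM.1.eigenvalues) *
      Matrix.diagonal ((↑) ∘ (Real.sqrt ·) ∘ hM.1.eigenvalues)
      = Matrix.diagonal (RCLike.ofReal ∘ hM.1.eigenvalues : Fin K → ℝ) := by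
    rw [Matrix.diagonal_mul_diagonal]
    congr 1
    funext i
    simp [Real.mul_self_sqrt (hM.eigenvalues_nonneg i)]
  calc _ = (hM.1.eigenvectorUnitary : Matrix (Fin K) (Fin K) ℝ) *
        Matrix.diagonal ((↑) ∘ (Real.sqrt ·) ∘ hM.1.eigenvalues) *
        ((star hM.1.eigenvectorUnitary : Matrix (Fin K) (Fin K) ℝ) *
        (hM.1.eigenvectorUnitary : Matrix (Fin K) (Fin K) ℝ)) *
        Matrix.diagonal ((↑) ∘ (Real.sqrt ·) ∘ hM.1.eigenvalues) *
        (star hM.1.eigenvectorUnitary : Matrix (Fin K) (Fin K) ℝ) := by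
          simp only [Matrix.mul_assoc]
    _ = _ := by rw [hU, Matrix.mul_one, Matrix.mul_assoc _ (Matrix.diagonal _) (Matrix.diagonal _), hD]

lemma detM_eq {K : ℕ} (P : ℝ) (hP : 0 < P) (h : Fin K → ℝ) :
    ((1 / P) • (1 : Matrix (Fin K) (Fin K) ℝ) + Matrix.vecMulVec h h).det
      = (1 / P) ^ K * (1 + (∑ ℓ, h ℓ ^ 2) * P) := by
  have h1 : ((1 / P) • (1 : Matrix (Fin K) (Fin K) ℝ) + Matrix.vecMulVec h h)
      = (1 / P) • (1 + Matrix.vecMulVec (P • h) h) := by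
    rw [smul_add]
    congr 1
    ext i j
    simp [Matrix.vecMulVec_apply]
    field_simp
  have h2 : h ⬝ᵥ (P • h) = (∑ ℓ, h ℓ ^ 2) * P := by
    simp only [dotProduct, Pi.smul_apply, smul_eq_mul, Finset.sum_mul]
    exact Finset.sum_congr rfl fun i _ => by ring
  rw [h1, Matrix.det_smul, Matrix.vecMulVec_eq (Fin 1),
    Matrix.det_one_add_replicateCol_mul_replicateRow, Fintype.card_fin, h2]

/-- If the nonzero integer vectors `a_1, …, a_K` satisfy
`∏ ‖F a_k‖² ≤ K^K (det F)²`, then with `SNR_k = α_k P` the computation rates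
`R_{comb,k} = max((1/2) log(SNR_k / ‖F a_k‖²), 0)` satisfy
`∑ R_{comb,k} ≥ (1/2) log(1 + ‖h‖² P) − (K/2) log K`. -/
theorem stmt_2 {K : ℕ} (hK : 1 ≤ K) (P : ℝ) (hP : 0 < P) (h α : Fin K → ℝ)
    (hα : ∀ ℓ, 0 < α ℓ)
    (hM : ((1 / P) • (1 : Matrix (Fin K) (Fin K) ℝ) + Matrix.vecMulVec h h).PosSemidef)
    (a : Fin K → Fin K → ℤ) (ha : ∀ k, a k ≠ 0)
    (hprod : ∏ k, (∑ i, ((Fmat hM α).mulVec (fun i => (a k i : ℝ)) i) ^ 2) ≤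
      (K : ℝ) ^ K * (Fmat hM α).det ^ 2) :
    (1 / 2) * Real.log (1 + (∑ ℓ, h ℓ ^ 2) * P) - ((K : ℝ) / 2) * Real.log K ≤
      ∑ k, max ((1 / 2) * Real.log
        ((α k * P) / ∑ i, ((Fmat hM α).mulVec (fun i => (a k i : ℝ)) i) ^ 2)) 0 := by
  set F := Fmat hM α with hFdef
  set S := (∑ ℓ, h ℓ ^ 2) * P with hSdef
  set N : Fin K → ℝ := fun k => ∑ i, (F.mulVec (fun i => (a k i : ℝ)) i) ^ 2 with hNdef
  have hS : 0 ≤ S := mul_nonneg (Finset.sum_nonneg fun i _ => sq_nonneg _) hP.le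
  have h1S : (0:ℝ) < 1 + S := by linarith
  have hKpos : (0:ℝ) < K := by exact_mod_cast hK
  have hdetM : ((1 / P) • (1 : Matrix (Fin K) (Fin K) ℝ) + Matrix.vecMulVec h h).det
      = (1 / P) ^ K * (1 + S) := detM_eq P hP h
  have hdetMpos : 0 < ((1 / P) • (1 : Matrix (Fin K) (Fin K) ℝ) + Matrix.vecMulVec h h).det := by
    rw [hdetM]; positivity
  have hsq : (sqrtM hM).det * (sqrtM hM).det
      = ((1 / P) • (1 : Matrix (Fin K) (Fin K) ℝ) + Matrix.vecMulVec h h).det := by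
    rw [← Matrix.det_mul, sqrtM_mul_self hM]
  have hsqne : (sqrtM hM).det ≠ 0 := by
    intro hc
    rw [hc, mul_zero] at hsq
    exact hdetMpos.ne (hsq)
  have hdetF : F.det = ((sqrtM hM).det)⁻¹ * ∏ ℓ, Real.sqrt (α ℓ) := by
    rw [hFdef, Fmat, Matrix.det_mul, Matrix.det_diagonal, Matrix.det_nonsing_inv,
      Ring.inverse_eq_inv']
    rfl
  have hdetF2 : F.det ^ 2
      = (((1 / P) • (1 : Matrix (Fin K) (Fin K) ℝ) + Matrix.vecMulVec h h).det)⁻¹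
        * ∏ ℓ, α ℓ := by
    rw [hdetF, mul_pow, ← Finset.prod_pow, ← hsq]
    congr 1
    · rw [sq, mul_inv]
    · exact Finset.prod_congr rfl fun ℓ _ => Real.sq_sqrt (hα ℓ).le
  have hFdetne : F.det ≠ 0 := by
    intro hc
    have : F.det ^ 2 = 0 := by rw [hc]; ring
    rw [hdetF2] at this
    have : 0 < (((1 / P) • (1 : Matrix (Fin K) (Fin K) ℝ)
        + Matrix.vecMulVec h h).det)⁻¹ * ∏ ℓ, α ℓ := by
      have := hdetMpos
      have hp : 0 < ∏ ℓ, α ℓ := Finset.prod_pos fun ℓ _ => hα ℓ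
      positivity
    linarith
  have hNpos : ∀ k, 0 < N k := by
    intro k
    obtain ⟨i0, hi0⟩ := Function.ne_iff.mp (ha k)
    have hv : (fun i => (a k i : ℝ)) ≠ 0 := by
      intro hc
      exact hi0 (by simpa using congrFun hc i0)
    have hinj : Function.Injective F.mulVec :=
      Matrix.mulVec_injective_iff_isUnit.mpr
        ((Matrix.isUnit_iff_isUnit_det F).mpr (isUnit_iff_ne_zero.mpr hFdetne))
    have hw : F.mulVec (fun i => (a k i : ℝ)) ≠ 0 := by
      intro hc
      exact hv (hinj (by rw [hc, Matrix.mulVec_zero]))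
    obtain ⟨j, hj⟩ := Function.ne_iff.mp hw
    have hj' : F.mulVec (fun i => (a k i : ℝ)) j ≠ 0 := by simpa using hj
    exact Finset.sum_pos' (fun i _ => sq_nonneg _)
      ⟨j, Finset.mem_univ j,
        lt_of_le_of_ne (sq_nonneg _) (Ne.symm (pow_ne_zero 2 hj'))⟩
  have hNprodpos : 0 < ∏ k, N k := Finset.prod_pos fun k _ => hNpos k
  have hratio : ∀ k, 0 < (α k * P) / N k :=
    fun k => div_pos (mul_pos (hα k) hP) (hNpos k)
  have hkey : (1 + S) / (K:ℝ) ^ K ≤ ∏ k, (α k * P) / N k := by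
    have hprodα : 0 < ∏ ℓ, α ℓ := Finset.prod_pos fun ℓ _ => hα ℓ
    have h2 : (1 + S) * ∏ k, N k ≤ ((∏ k, α k) * P ^ K) * (K:ℝ) ^ K := by
      have h3 := mul_le_mul_of_nonneg_left hprod h1S.le
      refine h3.trans_eq ?_
      rw [hdetF2, hdetM]
      field_simp
      rw [← mul_pow, one_div_mul_cancel hP.ne', one_pow]
    rw [Finset.prod_div_distrib, Finset.prod_mul_distrib, Finset.prod_const,
      Finset.card_univ, Fintype.card_fin,
      div_le_div_iff₀ (by positivity) hNprodpos]
    exact h2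
  calc (1 / 2) * Real.log (1 + S) - ((K : ℝ) / 2) * Real.log K
      = (1/2) * Real.log ((1 + S) / (K:ℝ) ^ K) := by
        rw [Real.log_div h1S.ne' (by positivity), Real.log_pow]
        ring
    _ ≤ (1/2) * Real.log (∏ k, (α k * P) / N k) := by
        have := Real.log_le_log (by positivity) hkey
        linarith
    _ = ∑ k, (1/2) * Real.log ((α k * P) / N k) := by
        rw [← Finset.mul_sum, Real.log_prod fun k _ => (hratio k).ne']
    _ ≤ ∑ k, max ((1/2) * Real.log ((α k * P) / N k)) 0 :=
        Finset.sum_le_sum fun k _ => le_max_left _ _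
end

section
/- Let K ≥ 1 and let F be an invertible K×K real matrix. Then there exist integer vectors a_1, …, a_K ∈ ℤ^K which are linearly independent over ℝ (when viewed as real vectors) and satisfy ∏_{k=1}^K ‖F a_k‖² ≤ K^K · (det F)². -/
open Matrix

open Filter Topology Set MeasureTheory InnerProductSpace Module
open scoped RealInnerProductSpace

/-!
Let `v₁, …, v_K` be successive minima of `ℤ^K` for `a ↦ ‖F a‖`: each `v_k` minimizes `‖F a‖`
over the integer vectors `a` outside the span of `v₁, …, v_{k-1}`. Put `λ_k = ‖F v_k‖`, let
`u₁, …, u_K` be the Gram–Schmidt orthonormalization of `F v₁, …, F v_K`, and let `M` be the matrix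
with rows `λ_k⁻¹ u_kᵀ F`. If `a ≠ 0` is an integer vector with `⟪u_k, F a⟫ ≠ 0`, then `F a` is not
in the span of the `F v_j` with `j < k`, so `λ_k ≤ ‖F a‖`; summing `⟪u_k, F a⟫² / λ_k²` over `k`
gives `‖M a‖ ≥ 1`. Minkowski's theorem for the cube then yields
`1 ≤ K^K (det M)² = K^K (det F)² / ∏ λ_k²`.
-/

section Coercivity

variable {ι : Type*} [Fintype ι]

lemma tendsto_intCast_pi_cofinite_cocompact :
    Tendsto (fun (a : ι → ℤ) i => (a i : ℝ)) cofinite (cocompact (ι → ℝ)) := by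
  simpa only [coprodᵢ_cofinite, coprodᵢ_cocompact] using
    Tendsto.pi_map_coprodᵢ fun _ : ι => Int.tendsto_coe_cofinite

lemma tendsto_norm_mulVec_intCast_cofinite_atTop [DecidableEq ι] {F : Matrix ι ι ℝ}
    (hF : F.det ≠ 0) :
    Tendsto (fun a : ι → ℤ => ‖WithLp.toLp 2 (F *ᵥ fun i => (a i : ℝ))‖) cofinite atTop := by
  let T : (ι → ℝ) ≃L[ℝ] EuclideanSpace ℝ ι :=
    ((F.toLinearEquiv' (invertibleOfIsUnitDet F hF.isUnit)).trans
      (WithLp.linearEquiv 2 ℝ (ι → ℝ)).symm).toContinuousLinearEquiv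
  exact tendsto_norm_cocompact_atTop.comp
    (T.toHomeomorph.isClosedEmbedding.tendsto_cocompact.comp tendsto_intCast_pi_cofinite_cocompact)

end Coercivity

section SuccessiveMinima

variable {ι : Type*}

structure IsSuccessiveMinima {n : ℕ} (N : (ι → ℤ) → ℝ) (v : Fin n → ι → ℤ) : Prop where
  linearIndependent : LinearIndependent ℝ fun k i => (v k i : ℝ)
  le_of_notMem_span (k : Fin n) (a : ι → ℤ) :
    (fun i => (a i : ℝ)) ∉ Submodule.span ℝ ((fun k i => (v k i : ℝ)) '' Iio k) → N (v k) ≤ N a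

lemma Fin.snoc_image_Iio_castSucc {α : Type*} {n : ℕ} (f : Fin n → α) (x : α) (j : Fin n) :
    (Fin.snoc f x : Fin (n + 1) → α) '' Iio j.castSucc = f '' Iio j := by
  rw [← Fin.image_castSucc_Iio, image_image]
  simp

lemma Fin.snoc_image_Iio_last {α : Type*} {n : ℕ} (f : Fin n → α) (x : α) :
    (Fin.snoc f x : Fin (n + 1) → α) '' Iio (Fin.last n) = range f := by
  have : Iio (Fin.last n) = range Fin.castSucc := by
    ext i
    simp only [mem_Iio, mem_range, Fin.lt_last_iff_ne_last, Fin.exists_castSucc_eq]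
  rw [this, ← range_comp, Fin.snoc_comp_castSucc]

lemma IsSuccessiveMinima.snoc {n : ℕ} {N : (ι → ℤ) → ℝ} {v : Fin n → ι → ℤ}
    (hv : IsSuccessiveMinima N v) {w : ι → ℤ}
    (hw : (fun i => (w i : ℝ)) ∉ Submodule.span ℝ (range fun k i => (v k i : ℝ)))
    (hmin : ∀ a : ι → ℤ, (fun i => (a i : ℝ)) ∉ Submodule.span ℝ (range fun k i => (v k i : ℝ)) →
      N w ≤ N a) :
    IsSuccessiveMinima N (Fin.snoc v w : Fin (n + 1) → ι → ℤ) := by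
  have hcast : (fun k i => ((Fin.snoc v w : Fin (n + 1) → ι → ℤ) k i : ℝ)) =
      Fin.snoc (fun k i => (v k i : ℝ)) (fun i => (w i : ℝ)) :=
    Fin.comp_snoc (fun (a : ι → ℤ) i => (a i : ℝ)) v w
  refine ⟨hcast ▸ linearIndependent_finSnoc.2 ⟨hv.linearIndependent, hw⟩, fun k a => ?_⟩
  rw [hcast]
  induction k using Fin.lastCases with
  | last => simpa [Fin.snoc_image_Iio_last] using hmin a
  | cast j => simpa [Fin.snoc_image_Iio_castSucc] using hv.le_of_notMem_span j a

variable [Fintype ι]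

lemma exists_intCast_notMem_span {n : ℕ} (hn : n < Fintype.card ι) (x : Fin n → ι → ℝ) :
    ∃ a : ι → ℤ, (fun i => (a i : ℝ)) ∉ Submodule.span ℝ (range x) := by
  classical
  by_contra! h
  have htop : Submodule.span ℝ (range x) = ⊤ := by
    refine eq_top_iff.2 ((Pi.basisFun ℝ ι).span_eq ▸ Submodule.span_le.2 ?_)
    rintro _ ⟨i, rfl⟩
    have hi : (fun j => ((Pi.single i 1 : ι → ℤ) j : ℝ)) = Pi.basisFun ℝ ι i := by
      ext j
      simp [Pi.single_apply]
    exact hi ▸ h _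
  have := finrank_range_le_card (R := ℝ) x
  rw [Set.finrank, htop, finrank_top, Module.finrank_fintype_fun_eq_card, Fintype.card_fin] at this
  omega

theorem exists_isSuccessiveMinima {N : (ι → ℤ) → ℝ} (hN : Tendsto N cofinite atTop) :
    ∀ n ≤ Fintype.card ι, ∃ v : Fin n → ι → ℤ, IsSuccessiveMinima N v
  | 0, _ => ⟨Fin.elim0, linearIndependent_empty_type, fun k => k.elim0⟩
  | n + 1, hn => by
    obtain ⟨v, hv⟩ := exists_isSuccessiveMinima hN n (by omega)
    obtain ⟨a, ha⟩ := exists_intCast_notMem_span hn fun k i => (v k i : ℝ)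
    obtain ⟨w, hw, hmin⟩ := hN.exists_within_forall_le
      (s := {b : ι → ℤ | (fun i => (b i : ℝ)) ∉ Submodule.span ℝ (range fun k i => (v k i : ℝ))})
      ⟨a, ha⟩
    exact ⟨_, hv.snoc hw hmin⟩

end SuccessiveMinima

section Minkowski

variable {ι : Type*} [Fintype ι]

theorem exists_intCast_ne_zero_mem_of_two_pow_le_volume [Nonempty ι] {s : Set (ι → ℝ)}
    (h_symm : ∀ x ∈ s, -x ∈ s) (h_conv : Convex ℝ s) (h_cpt : IsCompact s)
    (h : 2 ^ Fintype.card ι ≤ volume s) :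
    ∃ a : ι → ℤ, a ≠ 0 ∧ (fun i => (a i : ℝ)) ∈ s := by
  classical
  have hfund := ZSpan.isAddFundamentalDomain' (Pi.basisFun ℝ ι) volume
  have hvol : volume (ZSpan.fundamentalDomain (Pi.basisFun ℝ ι)) = 1 := by
    simp [ZSpan.fundamentalDomain_pi_basisFun, volume_pi_pi]
  -- instance search does not unfold `toAddSubgroup`
  have : Countable (Submodule.span ℤ (range (Pi.basisFun ℝ ι))).toAddSubgroup :=
    inferInstanceAs (Countable (Submodule.span ℤ (range (Pi.basisFun ℝ ι))))
  obtain ⟨⟨x, hx⟩, hx0, hxs⟩ := exists_ne_zero_mem_lattice_of_measure_mul_two_pow_le_measure hfund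
    h_symm h_conv h_cpt (by simpa [hvol] using h)
  obtain ⟨a, rfl⟩ := (Submodule.mem_span_range_iff_exists_fun ℤ).1 hx
  refine ⟨a, fun ha => hx0 (by simp [ha]), ?_⟩
  convert hxs
  simp [Finset.sum_apply, Pi.single_apply]

theorem exists_intCast_ne_zero_abs_mulVec_le [DecidableEq ι] [Nonempty ι] {M : Matrix ι ι ℝ}
    (hM : M.det ≠ 0) {c : ℝ} (hc : 0 ≤ c) (hdet : |M.det| ≤ c ^ Fintype.card ι) :
    ∃ a : ι → ℤ, a ≠ 0 ∧ ∀ i, |(M *ᵥ fun j => (a j : ℝ)) i| ≤ c := by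
  let box : Set (ι → ℝ) := univ.pi fun _ => Icc (-c) c
  let T : (ι → ℝ) ≃L[ℝ] (ι → ℝ) :=
    (M.toLinearEquiv' (invertibleOfIsUnitDet M hM.isUnit)).toContinuousLinearEquiv
  have hvol : volume (T ⁻¹' box) = ENNReal.ofReal (|M.det|⁻¹ * (2 * c) ^ Fintype.card ι) := by
    rw [show ⇑T = Matrix.toLin' M from rfl, Measure.addHaar_preimage_linearMap _
      (by rwa [LinearMap.det_toLin']), LinearMap.det_toLin', volume_pi_pi]
    simp [Real.volume_Icc, ENNReal.ofReal_mul (inv_nonneg.2 (abs_nonneg _)), ENNReal.ofReal_pow,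
      hc, two_mul]
  obtain ⟨a, ha, hmem⟩ := exists_intCast_ne_zero_mem_of_two_pow_le_volume (s := T ⁻¹' box)
    (fun x hx i _ => by simpa [abs_le, and_comm, neg_le] using hx i trivial)
    ((convex_pi fun _ _ => convex_Icc _ _).linear_preimage T.toLinearMap)
    (T.toHomeomorph.isCompact_preimage.2 (isCompact_univ_pi fun _ => isCompact_Icc)) (by
      rw [hvol, ← ENNReal.ofReal_ofNat, ← ENNReal.ofReal_pow zero_le_two]
      refine ENNReal.ofReal_le_ofReal ?_
      rw [le_inv_mul_iff₀ (abs_pos.2 hM), mul_pow, mul_comm]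
      gcongr)
  exact ⟨a, ha, fun i => abs_le.2 (hmem i trivial)⟩

theorem one_le_card_pow_mul_det_sq [DecidableEq ι] {M : Matrix ι ι ℝ} (hM : M.det ≠ 0)
    (h : ∀ a : ι → ℤ, a ≠ 0 → 1 ≤ ∑ i, (M *ᵥ fun j => (a j : ℝ)) i ^ 2) :
    1 ≤ (Fintype.card ι : ℝ) ^ Fintype.card ι * M.det ^ 2 := by
  cases isEmpty_or_nonempty ι
  · simp
  set n := Fintype.card ι
  set c := |M.det| ^ (n⁻¹ : ℝ)
  have hcn : c ^ n = |M.det| := by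
    rw [← Real.rpow_natCast, ← Real.rpow_mul (abs_nonneg _), inv_mul_cancel₀ (by positivity),
      Real.rpow_one]
  obtain ⟨a, ha, hle⟩ := exists_intCast_ne_zero_abs_mulVec_le hM (by positivity) hcn.ge
  have hsum : 1 ≤ n * c ^ 2 := calc
    1 ≤ ∑ i, (M *ᵥ fun j => (a j : ℝ)) i ^ 2 := h a ha
    _ ≤ ∑ _i : ι, c ^ 2 := Finset.sum_le_sum fun i _ => by
      simpa only [sq_abs] using pow_le_pow_left₀ (abs_nonneg _) (hle i) 2
    _ = n * c ^ 2 := by simp [n]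
  calc 1 ≤ (n * c ^ 2) ^ n := one_le_pow₀ hsum
    _ = n ^ n * M.det ^ 2 := by rw [mul_pow, ← pow_mul, mul_comm 2, pow_mul, hcn, sq_abs]

end Minkowski

theorem OrthonormalBasis.one_le_sum_inner_div_sq {ι E : Type*} [Fintype ι] [NormedAddCommGroup E]
    [InnerProductSpace ℝ E] (u : OrthonormalBasis ι ℝ E) {lam : ι → ℝ} (hlam : ∀ i, 0 < lam i)
    {x : E} (hx : x ≠ 0) (hle : ∀ i, ⟪u i, x⟫ ≠ 0 → lam i ≤ ‖x‖) :
    1 ≤ ∑ i, (⟪u i, x⟫ / lam i) ^ 2 := calc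
  1 = ∑ i, ⟪u i, x⟫ ^ 2 / ‖x‖ ^ 2 := by
    rw [← Finset.sum_div, u.sum_sq_inner_right, div_self (by positivity)]
  _ ≤ ∑ i, (⟪u i, x⟫ / lam i) ^ 2 := Finset.sum_le_sum fun i _ => by
    by_cases h : ⟪u i, x⟫ = 0
    · simp [h]
    · rw [div_pow]
      have := hlam i
      gcongr
      exact hle i h

theorem inner_gramSchmidtOrthonormalBasis_eq_zero_of_mem_span {𝕜 ι E : Type*} [RCLike 𝕜]
    [NormedAddCommGroup E] [InnerProductSpace 𝕜 E] [LinearOrder ι] [LocallyFiniteOrderBot ι]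
    [WellFoundedLT ι] [Fintype ι] [FiniteDimensional 𝕜 E] (h : finrank 𝕜 E = Fintype.card ι)
    (f : ι → E) {j : ι} {x : E} (hx : x ∈ Submodule.span 𝕜 (f '' Iio j)) :
    inner 𝕜 (gramSchmidtOrthonormalBasis h f j) x = 0 := by
  refine (Submodule.mem_orthogonal_singleton_iff_inner_right).1 ?_
  refine Submodule.span_le.2 ?_ hx
  rintro _ ⟨i, hi, rfl⟩
  exact (Submodule.mem_orthogonal_singleton_iff_inner_right).2
    (gramSchmidtOrthonormalBasis_inv_triangular h f hi)

theorem OrthonormalBasis.sq_det_toMatrix {ι F : Type*} [Fintype ι] [DecidableEq ι]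
    [NormedAddCommGroup F] [InnerProductSpace ℝ F] (a b : OrthonormalBasis ι ℝ F) :
    (a.toBasis.toMatrix b).det ^ 2 = 1 := by
  rcases a.det_to_matrix_orthonormalBasis_real b with h | h <;> simp [← Module.Basis.det_apply, h]

theorem OrthonormalBasis.transpose_toMatrix_mulVec {ι : Type*} [Fintype ι]
    (u : OrthonormalBasis ι ℝ (EuclideanSpace ℝ ι)) (y : ι → ℝ) :
    ((EuclideanSpace.basisFun ι ℝ).toBasis.toMatrix u)ᵀ *ᵥ y =
      fun i => ⟪u i, WithLp.toLp 2 y⟫ := by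
  ext i
  simp [mulVec, dotProduct, PiLp.inner_apply, Module.Basis.toMatrix_apply, mul_comm]

theorem IsSuccessiveMinima.prod_sq_le {n : ℕ} {F : Matrix (Fin n) (Fin n) ℝ} (hF : F.det ≠ 0)
    {v : Fin n → Fin n → ℤ}
    (hv : IsSuccessiveMinima (fun a => ‖WithLp.toLp 2 (F *ᵥ fun i => (a i : ℝ))‖) v) :
    ∏ k, ‖WithLp.toLp 2 (F *ᵥ fun i => (v k i : ℝ))‖ ^ 2 ≤ n ^ n * F.det ^ 2 := by
  let g : (Fin n → ℝ) ≃ₗ[ℝ] EuclideanSpace ℝ (Fin n) :=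
    (F.toLinearEquiv' (invertibleOfIsUnitDet F hF.isUnit)).trans (WithLp.linearEquiv 2 ℝ _).symm
  let w k := g fun i => (v k i : ℝ)
  let lam k := ‖w k‖
  have hlam k : 0 < lam k := norm_pos_iff.2 (g.map_ne_zero_iff.2 (hv.linearIndependent.ne_zero k))
  let u := gramSchmidtOrthonormalBasis (finrank_euclideanSpace (𝕜 := ℝ)) w
  let P := (EuclideanSpace.basisFun (Fin n) ℝ).toBasis.toMatrix u
  let M := diagonal (fun k => (lam k)⁻¹) * Pᵀ * F
  have hM x : M *ᵥ x = fun k => ⟪u k, g x⟫ / lam k := by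
    rw [← mulVec_mulVec, ← mulVec_mulVec, u.transpose_toMatrix_mulVec]
    ext k
    exact (mulVec_diagonal _ _ k).trans (inv_mul_eq_div _ _)
  have hdetM : M.det ^ 2 = F.det ^ 2 / ∏ k, lam k ^ 2 := by
    have hP : P.det ^ 2 = 1 := (EuclideanSpace.basisFun (Fin n) ℝ).sq_det_toMatrix u
    simp [M, det_mul, mul_pow, hP, Finset.prod_pow, div_eq_mul_inv, mul_comm]
  have hlow (a : Fin n → ℤ) (ha : a ≠ 0) : 1 ≤ ∑ k, (M *ᵥ fun i => (a i : ℝ)) k ^ 2 := by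
    rw [hM]
    refine u.one_le_sum_inner_div_sq hlam (g.map_ne_zero_iff.2 (by simpa [funext_iff] using ha))
      fun k hk => hv.le_of_notMem_span k a fun hmem => hk ?_
    refine inner_gramSchmidtOrthonormalBasis_eq_zero_of_mem_span _ w ?_
    simpa [image_image] using Submodule.apply_mem_span_image_of_mem_span g.toLinearMap hmem
  have hprod : 0 < ∏ k, lam k ^ 2 := Finset.prod_pos fun k _ => pow_pos (hlam k) 2
  have hMdet : M.det ≠ 0 := by
    rw [← pow_ne_zero_iff two_ne_zero, hdetM]
    exact div_ne_zero (pow_ne_zero 2 hF) hprod.ne'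
  have := one_le_card_pow_mul_det_sq hMdet hlow
  rwa [hdetM, Fintype.card_fin, mul_div_assoc', le_div_iff₀ hprod, one_mul] at this

theorem stmt_3_general {K : ℕ} (F : Matrix (Fin K) (Fin K) ℝ) (hF : IsUnit F) :
    ∃ a : Fin K → Fin K → ℤ,
      LinearIndependent ℝ (fun k => (fun i => (a k i : ℝ) : Fin K → ℝ)) ∧
      ∏ k, (∑ i, (F.mulVec (fun i => (a k i : ℝ)) i) ^ 2) ≤ (K : ℝ) ^ K * F.det ^ 2 := by
  have hdet : F.det ≠ 0 := ((isUnit_iff_isUnit_det F).1 hF).ne_zero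
  obtain ⟨v, hv⟩ :=
    exists_isSuccessiveMinima (tendsto_norm_mulVec_intCast_cofinite_atTop hdet) K (by simp)
  refine ⟨v, hv.linearIndependent, ?_⟩
  simpa only [EuclideanSpace.real_norm_sq_eq, PiLp.toLp_apply] using hv.prod_sq_le hdet

/-- For any invertible `K×K` real matrix `F` there exist linearly independent integer
vectors `a_1, …, a_K` with `∏ ‖F a_k‖² ≤ K^K (det F)²`. -/
theorem stmt_3 {K : ℕ} (hK : 1 ≤ K) (F : Matrix (Fin K) (Fin K) ℝ) (hF : IsUnit F) :
    ∃ a : Fin K → Fin K → ℤ,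
      LinearIndependent ℝ (fun k => (fun i => (a k i : ℝ) : Fin K → ℝ)) ∧
      ∏ k, (∑ i, (F.mulVec (fun i => (a k i : ℝ)) i) ^ 2) ≤ (K : ℝ) ^ K * F.det ^ 2 :=
  stmt_3_general F hF
end

section
/- Let n ≥ 1, r > 0, and let S ⊆ ℝⁿ be a Lebesgue measurable set whose Lebesgue measure equals the Lebesgue measure of the closed Euclidean ball B(0, r) of radius r centered at the origin. Then ∫_S ‖x‖² dx ≥ ∫_{B(0,r)} ‖x‖² dx; that is, among all measurable sets of a given volume, the ball centered at the origin minimizes the second moment. -/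
/-!
Bathtub principle: `S` and the ball `B` differ by the sets `B \ S` and `S \ B`, which have the
same measure. On the first the integrand is at most `sup_B ‖x‖²`, on the second at least that,
so trading `B \ S` for `S \ B` can only increase the integral.
-/

open MeasureTheory Set

theorem MeasureTheory.setLIntegral_le_of_measure_eq {α : Type*} [MeasurableSpace α]
    {μ : Measure α} {f : α → ENNReal} {s t : Set α} (hs : MeasurableSet s)
    (ht : MeasurableSet t) (hst : μ s = μ t) (hfin : μ s ≠ ⊤)
    (hf : ∀ x ∈ s, ∀ y ∉ s, f x ≤ f y) :
    ∫⁻ x in s, f x ∂μ ≤ ∫⁻ x in t, f x ∂μ := by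
  set c := ⨆ x ∈ s, f x
  have hdiff : μ (s \ t) = μ (t \ s) :=
    measure_sdiff_symm hs.nullMeasurableSet ht.nullMeasurableSet hst
      (ne_top_of_le_ne_top hfin (measure_mono inter_subset_left))
  have hsdiff : ∫⁻ x in s \ t, f x ∂μ ≤ ∫⁻ x in t \ s, f x ∂μ :=
    calc ∫⁻ x in s \ t, f x ∂μ
        ≤ ∫⁻ _ in s \ t, c ∂μ :=
          setLIntegral_mono' (hs.diff ht) fun x hx => le_iSup₂ (f := fun x _ => f x) x hx.1
      _ = ∫⁻ _ in t \ s, c ∂μ := by rw [setLIntegral_const, setLIntegral_const, hdiff]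
      _ ≤ ∫⁻ y in t \ s, f y ∂μ :=
          setLIntegral_mono' (ht.diff hs) fun y hy => iSup₂_le fun x hx => hf x hx y hy.2
  calc ∫⁻ x in s, f x ∂μ
      = ∫⁻ x in s ∩ t, f x ∂μ + ∫⁻ x in s \ t, f x ∂μ := (lintegral_inter_add_sdiff f s ht).symm
    _ ≤ ∫⁻ x in t ∩ s, f x ∂μ + ∫⁻ x in t \ s, f x ∂μ := by rw [inter_comm]; gcongr
    _ = ∫⁻ x in t, f x ∂μ := lintegral_inter_add_sdiff f t hs

theorem stmt_10_general (n : ℕ) (r : ℝ)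
    (S : Set (EuclideanSpace ℝ (Fin n))) (hS : MeasurableSet S)
    (hvol : volume S = volume (Metric.closedBall (0 : EuclideanSpace ℝ (Fin n)) r)) :
    ∫⁻ x in Metric.closedBall (0 : EuclideanSpace ℝ (Fin n)) r, ENNReal.ofReal (‖x‖ ^ 2) ≤
      ∫⁻ x in S, ENNReal.ofReal (‖x‖ ^ 2) := by
  refine setLIntegral_le_of_measure_eq measurableSet_closedBall hS hvol.symm
    measure_closedBall_lt_top.ne fun x hx y hy => ?_
  have hxy : ‖x‖ ≤ ‖y‖ := by
    rw [mem_closedBall_zero_iff] at hx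
    rw [mem_closedBall_zero_iff, not_le] at hy
    exact hx.trans hy.le
  exact ENNReal.ofReal_le_ofReal (pow_le_pow_left₀ (norm_nonneg x) hxy 2)

/-- Among all measurable subsets of `ℝⁿ` with the same volume as the ball `B(0,r)`, the
ball minimizes the second moment `∫ ‖x‖²`. -/
theorem stmt_10 (n : ℕ) (hn : 1 ≤ n) (r : ℝ) (hr : 0 < r)
    (S : Set (EuclideanSpace ℝ (Fin n))) (hS : MeasurableSet S)
    (hvol : volume S = volume (Metric.closedBall (0 : EuclideanSpace ℝ (Fin n)) r)) :
    ∫⁻ x in Metric.closedBall (0 : EuclideanSpace ℝ (Fin n)) r, ENNReal.ofReal (‖x‖ ^ 2) ≤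
      ∫⁻ x in S, ENNReal.ofReal (‖x‖ ^ 2) :=
  stmt_10_general n r S hS hvol
end

section
/- Let n ≥ 1, r > 0, and let D ⊆ ℝⁿ be a Lebesgue measurable set with 0 < vol(D) < ∞ whose Lebesgue measure equals that of the closed Euclidean ball B(0, r). Then the second moment per dimension of the uniform distribution on D is at least that of the uniform distribution on B(0,r): (1/(n·vol(D))) · ∫_D ‖x‖² dx ≥ r²/(n+2). -/
/-!
Among sets of a given finite measure, the integral of `‖x‖²` is smallest on the centred ball:
the ball `B` and a competitor `D` of the same measure differ by `B \ D` and `D \ B`, which have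
equal measure, and `‖x‖² ≤ r²` on the first while `‖x‖² ≥ r²` on the second. The second moment
of the ball itself is computed in polar coordinates, `∫_B ‖x‖² = n/(n+2) · r² · vol B`.
-/

open MeasureTheory Set Metric
open scoped ENNReal

theorem setLIntegral_le_setLIntegral_of_measure_eq {α : Type*} [MeasurableSpace α]
    {μ : Measure α} {f : α → ℝ≥0∞} {s t : Set α} {c : ℝ≥0∞} (hs : MeasurableSet s)
    (ht : MeasurableSet t) (hμ : μ s = μ t) (hfin : μ s ≠ ∞)
    (hle : ∀ x ∈ s, f x ≤ c) (hge : ∀ x ∉ s, c ≤ f x) :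
    ∫⁻ x in s, f x ∂μ ≤ ∫⁻ x in t, f x ∂μ := by
  rw [← lintegral_inter_add_sdiff f s ht, ← lintegral_inter_add_sdiff f t hs, inter_comm t s]
  refine add_le_add le_rfl ?_
  calc ∫⁻ x in s \ t, f x ∂μ ≤ ∫⁻ _ in s \ t, c ∂μ :=
        setLIntegral_mono' (hs.diff ht) fun x hx ↦ hle x hx.1
    _ = c * μ (s \ t) := setLIntegral_const _ _
    _ = c * μ (t \ s) := by
      rw [measure_sdiff_symm hs.nullMeasurableSet ht.nullMeasurableSet hμ
        (measure_ne_top_of_subset inter_subset_left hfin)]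
    _ = ∫⁻ _ in t \ s, c ∂μ := (setLIntegral_const _ _).symm
    _ ≤ ∫⁻ x in t \ s, f x ∂μ := setLIntegral_mono' (ht.diff hs) fun x hx ↦ hge x hx.2

section
variable {E : Type*} [NormedAddCommGroup E] [NormedSpace ℝ E] [FiniteDimensional ℝ E]
  [Nontrivial E] [MeasurableSpace E] [BorelSpace E] (μ : Measure E) [μ.IsAddHaarMeasure]

theorem integral_closedBall_norm_pow (k : ℕ) {r : ℝ} (hr : 0 ≤ r) :
    ∫ x in closedBall (0 : E) r, ‖x‖ ^ k ∂μ =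
      Module.finrank ℝ E / (Module.finrank ℝ E + k) * r ^ k * μ.real (closedBall 0 r) := by
  set d := Module.finrank ℝ E
  have hd : 1 ≤ d := Module.finrank_pos
  have hradial : ∫ y in Ioi (0 : ℝ), y ^ (d - 1) • (Iic r).indicator (· ^ k) y =
      r ^ (d + k) / (d + k) := by
    have hintegrand : ∀ y, y ^ (d - 1) • (Iic r).indicator (· ^ k) y =
        (Iic r).indicator (· ^ (d - 1 + k)) y := by
      intro y
      by_cases hy : y ≤ r <;> simp [hy, pow_add]
    simp_rw [hintegrand, setIntegral_indicator measurableSet_Iic, Ioi_inter_Iic,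
      ← intervalIntegral.integral_of_le hr, integral_pow]
    have hexp : d - 1 + k + 1 = d + k := by omega
    rw [← Nat.cast_add_one, hexp, zero_pow (by omega), sub_zero, Nat.cast_add]
  calc ∫ x in closedBall (0 : E) r, ‖x‖ ^ k ∂μ = ∫ x, (Iic r).indicator (· ^ k) ‖x‖ ∂μ := by
        rw [← integral_indicator measurableSet_closedBall]
        congr 1 with x
        by_cases hx : ‖x‖ ≤ r <;> simp [indicator, hx]
    _ = d * μ.real (ball 0 1) * (r ^ (d + k) / (d + k)) := by
        rw [integral_fun_norm_addHaar, hradial, nsmul_eq_mul, smul_eq_mul, mul_assoc]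
    _ = _ := by
        rw [Measure.addHaar_real_closedBall μ _ hr, pow_add]
        field_simp
        ring

theorem lintegral_closedBall_norm_pow (k : ℕ) {r : ℝ} (hr : 0 ≤ r) :
    ∫⁻ x in closedBall (0 : E) r, ENNReal.ofReal (‖x‖ ^ k) ∂μ =
      ENNReal.ofReal (r ^ k / (Module.finrank ℝ E + k)) *
        (Module.finrank ℝ E * μ (closedBall 0 r)) := by
  have hint : IntegrableOn (fun x : E ↦ ‖x‖ ^ k) (closedBall 0 r) μ :=
    (continuous_norm.pow k).continuousOn.integrableOn_compact (isCompact_closedBall _ _)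
  rw [← ofReal_integral_eq_lintegral_ofReal hint (ae_of_all _ fun _ ↦ by positivity),
    integral_closedBall_norm_pow μ k hr, ← ofReal_measureReal measure_closedBall_lt_top.ne,
    ← ENNReal.ofReal_natCast, ← ENNReal.ofReal_mul (by positivity),
    ← ENNReal.ofReal_mul (by positivity)]
  congr 1
  ring

end

theorem stmt_12_general (n : ℕ) (hn : 1 ≤ n) (r : ℝ) (hr : 0 < r)
    (D : Set (EuclideanSpace ℝ (Fin n))) (hD : MeasurableSet D)
    (h0 : 0 < volume D)
    (hvol : volume D = volume (Metric.closedBall (0 : EuclideanSpace ℝ (Fin n)) r)) :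
    ENNReal.ofReal (r ^ 2 / ((n : ℝ) + 2)) ≤
      (∫⁻ x in D, ENNReal.ofReal (‖x‖ ^ 2)) / ((n : ENNReal) * volume D) := by
  have : Nontrivial (EuclideanSpace ℝ (Fin n)) :=
    Module.nontrivial_of_finrank_pos (R := ℝ) (by rw [finrank_euclideanSpace_fin]; omega)
  have hball := lintegral_closedBall_norm_pow (volume : Measure (EuclideanSpace ℝ (Fin n))) 2 hr.le
  rw [finrank_euclideanSpace_fin, Nat.cast_ofNat, ← hvol] at hball
  have hmoment : ∫⁻ x in closedBall (0 : EuclideanSpace ℝ (Fin n)) r, ENNReal.ofReal (‖x‖ ^ 2)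
      ≤ ∫⁻ x in D, ENNReal.ofReal (‖x‖ ^ 2) := by
    refine setLIntegral_le_setLIntegral_of_measure_eq (c := ENNReal.ofReal (r ^ 2))
      measurableSet_closedBall hD hvol.symm measure_closedBall_lt_top.ne
      (fun x hx ↦ ?_) fun x hx ↦ ?_
    · rw [mem_closedBall_zero_iff] at hx
      gcongr
    · rw [mem_closedBall_zero_iff, not_le] at hx
      gcongr
  rw [ENNReal.le_div_iff_mul_le (.inl (mul_ne_zero (Nat.cast_ne_zero.2 (by omega)) h0.ne'))
    (.inl (ENNReal.mul_ne_top (ENNReal.natCast_ne_top n) (hvol ▸ measure_closedBall_lt_top.ne)))]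
  exact hball ▸ hmoment

/-- If `D ⊆ ℝⁿ` is measurable with `0 < vol(D) < ∞` and `vol(D) = vol(B(0,r))`, then the
second moment per dimension of the uniform distribution on `D` is at least `r²/(n+2)`,
the second moment per dimension of the uniform distribution on the ball `B(0,r)`. -/
theorem stmt_12 (n : ℕ) (hn : 1 ≤ n) (r : ℝ) (hr : 0 < r)
    (D : Set (EuclideanSpace ℝ (Fin n))) (hD : MeasurableSet D)
    (h0 : 0 < volume D) (hfin : volume D < ⊤)
    (hvol : volume D = volume (Metric.closedBall (0 : EuclideanSpace ℝ (Fin n)) r)) :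
    ENNReal.ofReal (r ^ 2 / ((n : ℝ) + 2)) ≤
      (∫⁻ x in D, ENNReal.ofReal (‖x‖ ^ 2)) / ((n : ENNReal) * volume D) :=
  stmt_12_general n hn r hr D hD h0 hvol
end
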